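/- arXiv:2206.07206 — 2 statements merged into one kernel-verified Lean document; each statement's English description precedes it below -/
import Mathlib

section
/- Let m < n be positive natural numbers. Let M be a second-countable smooth manifold of dimension m (modeled on EuclideanSpace ℝ (Fin m)), and let f : M → EuclideanSpace ℝ (Fin n) be a C^1 map. Then the range of f is a Lebesgue-null set, i.e. the Lebesgue measure (volume) of Set.range f in EuclideanSpace ℝ (Fin n) is zero. -/
/-!
In a chart a `C¹` map is locally Lipschitz, so it does not raise Hausdorff dimension; by second
countability the range is a countable union of such local images and has Hausdorff dimension at
most `m < n`. Such a set is `μH[n]`-null, and by uniqueness of Haar measure Lebesgue measure is a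
multiple of `μH[n]`.
-/

open Set Filter Topology Module Manifold MeasureTheory
open scoped ENNReal

theorem dimH_range_le_of_forall_exists_mem_nhds {X Y : Type*} [TopologicalSpace X]
    [SecondCountableTopology X] [EMetricSpace Y] {f : X → Y} {d : ℝ≥0∞}
    (h : ∀ x, ∃ U ∈ 𝓝 x, dimH (f '' U) ≤ d) : dimH (range f) ≤ d := by
  choose U hUx hU using h
  obtain ⟨T, hTc, hTU⟩ := TopologicalSpace.isOpen_iUnion_countable (fun x => interior (U x))
    fun _ => isOpen_interior
  have hcover : ⋃ x ∈ T, interior (U x) = univ :=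
    hTU.trans <| iUnion_eq_univ_iff.2 fun x => ⟨x, mem_interior_iff_mem_nhds.2 (hUx x)⟩
  rw [← image_univ, ← hcover, image_iUnion₂, dimH_bUnion hTc]
  exact iSup₂_le fun x _ => (dimH_mono (image_mono interior_subset)).trans (hU x)

section

variable {E F : Type*} [NormedAddCommGroup E] [NormedSpace ℝ E] [FiniteDimensional ℝ E]
  [NormedAddCommGroup F] [NormedSpace ℝ F]

theorem ContMDiffAt.exists_mem_nhds_dimH_image_le_finrank {M : Type*} [TopologicalSpace M]
    [ChartedSpace E M] {f : M → F} {x : M} (hf : ContMDiffAt 𝓘(ℝ, E) 𝓘(ℝ, F) 1 f x) :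
    ∃ U ∈ 𝓝 x, dimH (f '' U) ≤ finrank ℝ E := by
  set e := chartAt E x
  have hg : ContDiffAt ℝ 1 (f ∘ e.symm) (e x) := by
    simpa [contMDiffAt_iff, ContDiffWithinAtProp, chartAt_self_eq, contDiffWithinAt_univ, e]
      using hf.2
  obtain ⟨C, u, hu, hlip⟩ := hg.exists_lipschitzOnWith
  refine ⟨e.source ∩ e ⁻¹' u, inter_mem (chart_source_mem_nhds E x)
    ((e.continuousAt (mem_chart_source E x)).preimage_mem_nhds hu), ?_⟩
  calc dimH (f '' (e.source ∩ e ⁻¹' u)) ≤ dimH ((f ∘ e.symm) '' u) := by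
        refine dimH_mono ?_
        rintro _ ⟨y, ⟨hys, hyu⟩, rfl⟩
        exact ⟨e y, hyu, by simp [e.left_inv hys]⟩
    _ ≤ dimH u := hlip.dimH_image_le
    _ ≤ dimH (univ : Set E) := dimH_mono (subset_univ u)
    _ = finrank ℝ E := Real.dimH_univ_eq_finrank E

theorem ContMDiff.dimH_range_le_finrank {M : Type*} [TopologicalSpace M] [ChartedSpace E M]
    [SecondCountableTopology M] {f : M → F} (hf : ContMDiff 𝓘(ℝ, E) 𝓘(ℝ, F) 1 f) :
    dimH (range f) ≤ finrank ℝ E :=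
  dimH_range_le_of_forall_exists_mem_nhds fun x => (hf x).exists_mem_nhds_dimH_image_le_finrank

theorem measure_eq_zero_of_dimH_lt_finrank [MeasurableSpace E] [BorelSpace E] (μ : Measure E)
    [μ.IsAddLeftInvariant] [IsFiniteMeasureOnCompacts μ] {s : Set E}
    (hs : dimH s < finrank ℝ E) : μ s = 0 := by
  have hH : μH[(finrank ℝ E : ℝ)] s = 0 := by
    simpa using hausdorffMeasure_of_dimH_lt (d := finrank ℝ E) (by exact_mod_cast hs)
  rw [μ.isAddLeftInvariant_eq_smul μH[finrank ℝ E], Measure.smul_apply, hH, smul_zero]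

end

theorem stmt_1_general (m n : ℕ) (hmn : m < n)
    {M : Type*} [TopologicalSpace M] [ChartedSpace (EuclideanSpace ℝ (Fin m)) M]
    [SecondCountableTopology M]
    (f : M → EuclideanSpace ℝ (Fin n))
    (hf : ContMDiff (𝓡 m) (𝓡 n) 1 f) :
    volume (Set.range f) = 0 := by
  refine measure_eq_zero_of_dimH_lt_finrank volume ?_
  calc dimH (range f) ≤ finrank ℝ (EuclideanSpace ℝ (Fin m)) := hf.dimH_range_le_finrank
    _ < finrank ℝ (EuclideanSpace ℝ (Fin n)) := by simpa using hmn

/-- The range of a `C^1` map from a second-countable smooth `m`-manifold to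
`EuclideanSpace ℝ (Fin n)`, with `m < n`, is Lebesgue-null. -/
theorem stmt_1 (m n : ℕ) (hm : 0 < m) (hn : 0 < n) (hmn : m < n)
    {M : Type*} [TopologicalSpace M] [ChartedSpace (EuclideanSpace ℝ (Fin m)) M]
    [IsManifold (𝓡 m) (⊤ : ℕ∞) M] [SecondCountableTopology M]
    (f : M → EuclideanSpace ℝ (Fin n))
    (hf : ContMDiff (𝓡 m) (𝓡 n) 1 f) :
    volume (Set.range f) = 0 :=
  stmt_1_general m n hmn f hf
end

section
/- Let m < n be positive natural numbers, and let M be a second-countable smooth manifold of dimension m (modeled on EuclideanSpace ℝ (Fin m)). If there exists a smooth immersion f : M → S^n, i.e. a smooth (C^∞) map whose differential mfderiv is injective at every point of M, then there exists a smooth immersion g : M → EuclideanSpace ℝ (Fin n), i.e. a smooth map whose differential mfderiv is injective at every point of M. -/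
/-!
A smooth map from an `m`-manifold does not increase Hausdorff dimension beyond `m`, whereas
the sphere `S^n` has Hausdorff dimension at least `n` (stereographic projection is locally
Lipschitz and maps it onto `ℝⁿ`). Since `m < n`, an immersion `f : M → S^n` misses some point
`p`, and composing `f` with the stereographic chart at `p` gives an immersion into `ℝⁿ`.
-/

open Metric Manifold

noncomputable section

instance factFinrankEuclidean (n : ℕ) :
    Fact (Module.finrank ℝ (EuclideanSpace ℝ (Fin (n + 1))) = n + 1) :=
  ⟨finrank_euclideanSpace_fin⟩

open Set Function Module
open scoped ENNReal

theorem ContDiffOn.dimH_image_le_of_isOpen {E F : Type*} [NormedAddCommGroup E]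
    [NormedSpace ℝ E] [SecondCountableTopology E] [NormedAddCommGroup F] [NormedSpace ℝ F]
    {f : E → F} {s t : Set E} (hf : ContDiffOn ℝ 1 f s) (hs : IsOpen s) (ht : t ⊆ s) :
    dimH (f '' t) ≤ dimH t :=
  dimH_image_le_of_locally_lipschitzOn fun _ hx =>
    let ⟨C, u, hu, hf⟩ := (hf.contDiffAt (hs.mem_nhds (ht hx))).exists_lipschitzOnWith
    ⟨C, u, nhdsWithin_le_nhds hu, hf⟩

theorem ContMDiff.dimH_range_le {E E' M : Type*} [NormedAddCommGroup E] [NormedSpace ℝ E]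
    [FiniteDimensional ℝ E] [NormedAddCommGroup E'] [NormedSpace ℝ E'] [TopologicalSpace M]
    [ChartedSpace E M] [SecondCountableTopology M] {k : WithTop ℕ∞} [IsManifold 𝓘(ℝ, E) k M]
    {F : M → E'} (hF : ContMDiff 𝓘(ℝ, E) 𝓘(ℝ, E') k F) (hk : 1 ≤ k) :
    dimH (range F) ≤ finrank ℝ E := by
  obtain ⟨c, hc, hcov⟩ := TopologicalSpace.countable_cover_nhds
    fun x : M => (chartAt E x).open_source.mem_nhds (mem_chart_source E x)
  rw [← image_univ, ← hcov, image_iUnion₂, dimH_bUnion hc]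
  refine iSup₂_le fun x _ => ?_
  have hsmooth : ContDiffOn ℝ 1 (F ∘ (chartAt E x).symm) (chartAt E x).target :=
    (hF.comp_contMDiffOn contMDiffOn_chart_symm).contDiffOn.of_le hk
  calc dimH (F '' (chartAt E x).source)
      = dimH ((F ∘ (chartAt E x).symm) '' (chartAt E x).target) := by
        rw [image_comp, (chartAt E x).symm_image_target_eq_source]
    _ ≤ dimH (chartAt E x).target :=
        hsmooth.dimH_image_le_of_isOpen (chartAt E x).open_target subset_rfl
    _ ≤ finrank ℝ E := (dimH_mono (subset_univ _)).trans_eq (Real.dimH_univ_eq_finrank E)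

theorem natCast_le_dimH_sphere {E : Type*} [NormedAddCommGroup E] [InnerProductSpace ℝ E]
    (n : ℕ) [Fact (finrank ℝ E = n + 1)] : (n : ℝ≥0∞) ≤ dimH (sphere (0 : E) 1) := by
  have : FiniteDimensional ℝ E := .of_fact_finrank_eq_succ n
  have : Nontrivial E := nontrivial_of_finrank_eq_succ (R := ℝ) (n := n) Fact.out
  obtain ⟨v, hv⟩ := (NormedSpace.sphere_nonempty (x := (0 : E))).2 zero_le_one
  rw [mem_sphere_zero_iff_norm] at hv
  have hdomain : sphere (0 : E) 1 \ {v} ⊆ {x | innerSL ℝ v x ≠ 1} := by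
    rintro x ⟨hx, hxv⟩ h
    exact hxv ((inner_eq_one_iff_of_norm_eq_one hv (norm_eq_of_mem_sphere ⟨x, hx⟩)).1 h).symm
  have himage : stereoToFun v '' (sphere (0 : E) 1 \ {v}) = univ := by
    refine eq_univ_of_forall fun w => ⟨stereoInvFun hv w, ⟨(stereoInvFun hv w).2, ?_⟩,
      stereo_right_inv hv w⟩
    exact fun h => stereoInvFun_ne_north_pole hv w (Subtype.ext h)
  calc (n : ℝ≥0∞) = dimH (univ : Set (ℝ ∙ v)ᗮ) := by
        rw [Real.dimH_univ_eq_finrank,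
          Submodule.finrank_orthogonal_span_singleton (n := n) (by rintro rfl; simp at hv)]
    _ = dimH (stereoToFun v '' (sphere (0 : E) 1 \ {v})) := by rw [himage]
    _ ≤ dimH (sphere (0 : E) 1 \ {v}) :=
        contDiffOn_stereoToFun.dimH_image_le_of_isOpen
          (isOpen_ne.preimage (innerSL ℝ v).continuous) hdomain
    _ ≤ dimH (sphere (0 : E) 1) := dimH_mono sdiff_subset

theorem ContMDiff.not_surjective_sphere {E H M : Type*} [NormedAddCommGroup E]
    [InnerProductSpace ℝ E] {n : ℕ} [Fact (finrank ℝ E = n + 1)] [NormedAddCommGroup H]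
    [NormedSpace ℝ H] [FiniteDimensional ℝ H] [TopologicalSpace M] [ChartedSpace H M]
    [SecondCountableTopology M] {k : WithTop ℕ∞} [IsManifold 𝓘(ℝ, H) k M]
    {f : M → sphere (0 : E) 1} (hf : ContMDiff 𝓘(ℝ, H) (𝓡 n) k f) (hk : 1 ≤ k)
    (hdim : finrank ℝ H < n) : ¬ Surjective f := by
  intro hsurj
  have hcover : sphere (0 : E) 1 ⊆ range ((↑) ∘ f) := fun x hx =>
    let ⟨y, hy⟩ := hsurj ⟨x, hx⟩
    ⟨y, congrArg Subtype.val hy⟩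
  have := (natCast_le_dimH_sphere n).trans <| (dimH_mono hcover).trans <|
    (contMDiff_coe_sphere.comp hf).dimH_range_le hk
  exact hdim.not_ge (by exact_mod_cast this)

theorem injective_mfderiv_comp_of_mem_maximalAtlas {E H M E' H' N : Type*}
    [NormedAddCommGroup E] [NormedSpace ℝ E] [TopologicalSpace H] {I : ModelWithCorners ℝ E H}
    [TopologicalSpace M] [ChartedSpace H M]
    [NormedAddCommGroup E'] [NormedSpace ℝ E'] [TopologicalSpace H'] {I' : ModelWithCorners ℝ E' H'}
    [TopologicalSpace N] [ChartedSpace H' N] {k : WithTop ℕ∞} {e : OpenPartialHomeomorph N H'}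
    (he : e ∈ IsManifold.maximalAtlas I' k N) (hk : k ≠ 0) {f : M → N} (hf : ContMDiff I I' k f)
    (hfe : ∀ x, f x ∈ e.source) (x : M) (hinj : Injective (mfderiv I I' f x)) :
    Injective (mfderiv I I' (e ∘ f) x) := by
  have hf_eq : f =ᶠ[nhds x] e.symm ∘ (e ∘ f) :=
    Filter.Eventually.of_forall fun y => (e.left_inv (hfe y)).symm
  have hsymm : MDifferentiableAt I' I' e.symm (e (f x)) :=
    ((contMDiffOn_symm_of_mem_maximalAtlas he).mdifferentiableOn hk).mdifferentiableAt
      (e.open_target.mem_nhds (e.map_source (hfe x)))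
  have hcomp : MDifferentiableAt I I' (e ∘ f) x :=
    ((contMDiffOn_of_mem_maximalAtlas he).comp_contMDiff hf hfe).mdifferentiableAt hk
  rw [hf_eq.mfderiv_eq, mfderiv_comp x hsymm hcomp] at hinj
  exact fun a b hab => hinj (congrArg (mfderiv I' I' e.symm (e (f x))) hab)

theorem stmt_2_general (m n : ℕ) (hmn : m < n)
    {M : Type*} [TopologicalSpace M] [ChartedSpace (EuclideanSpace ℝ (Fin m)) M]
    [IsManifold (𝓡 m) (⊤ : ℕ∞) M] [SecondCountableTopology M]
    (h : ∃ f : M → sphere (0 : EuclideanSpace ℝ (Fin (n + 1))) 1,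
      ContMDiff (𝓡 m) (𝓡 n) (⊤ : ℕ∞) f ∧
      ∀ x : M, Function.Injective (mfderiv (𝓡 m) (𝓡 n) f x)) :
    ∃ g : M → EuclideanSpace ℝ (Fin n),
      ContMDiff (𝓡 m) (𝓡 n) (⊤ : ℕ∞) g ∧
      ∀ x : M, Function.Injective (mfderiv (𝓡 m) (𝓡 n) g x) := by
  obtain ⟨f, hf, hinj⟩ := h
  obtain ⟨p, hp⟩ : ∃ p, p ∉ range f := by
    simpa [Surjective] using hf.not_surjective_sphere (by simp) (by simpa using hmn)
  have hchart : stereographic' n p ∈ IsManifold.maximalAtlas (𝓡 n) (⊤ : ℕ∞) _ :=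
    IsManifold.subset_maximalAtlas ⟨p, rfl⟩
  have hsource : ∀ x, f x ∈ (stereographic' n p).source := by
    simpa [stereographic'_source] using fun x hx => hp ⟨x, hx⟩
  exact ⟨stereographic' n p ∘ f,
    (contMDiffOn_of_mem_maximalAtlas hchart).comp_contMDiff hf hsource,
    fun x => injective_mfderiv_comp_of_mem_maximalAtlas hchart (by simp) hf hsource x (hinj x)⟩

/-- If a second-countable smooth `m`-manifold (`m < n`) admits a smooth immersion into
the sphere `S^n`, then it admits a smooth immersion into `EuclideanSpace ℝ (Fin n)`. -/
theorem stmt_2 (m n : ℕ) (hm : 0 < m) (hn : 0 < n) (hmn : m < n)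
    {M : Type*} [TopologicalSpace M] [ChartedSpace (EuclideanSpace ℝ (Fin m)) M]
    [IsManifold (𝓡 m) (⊤ : ℕ∞) M] [SecondCountableTopology M]
    (h : ∃ f : M → sphere (0 : EuclideanSpace ℝ (Fin (n + 1))) 1,
      ContMDiff (𝓡 m) (𝓡 n) (⊤ : ℕ∞) f ∧
      ∀ x : M, Function.Injective (mfderiv (𝓡 m) (𝓡 n) f x)) :
    ∃ g : M → EuclideanSpace ℝ (Fin n),
      ContMDiff (𝓡 m) (𝓡 n) (⊤ : ℕ∞) g ∧
      ∀ x : M, Function.Injective (mfderiv (𝓡 m) (𝓡 n) g x) :=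
  stmt_2_general m n hmn h
end
end
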